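/- arXiv:2102.09524 — 2 statements merged into one kernel-verified Lean document; each statement's English description precedes it below -/
import Mathlib

section
/- Let G be a group, A a set with at least two elements, and H ≤ G a subgroup of infinite index. Then the set {x ∈ A^G : Stab_G(x) = H} is infinite, where Stab_G(x) is the stabiliser of x under the shift action. -/
/-! For `t ∈ G`, the configuration equal to `a` on the right coset `H t⁻¹` and to `b` elsewhere
has stabiliser exactly `H`, and two such configurations coincide only when `t` and `t'` lie in the
same left coset of `H`. An infinite index therefore yields infinitely many of them. -/

/-- The shift action of a group `G` on the full shift `A^G`: `(g • x) h = x (g⁻¹ * h)`. -/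
instance shiftMulAction (G A : Type*) [Group G] : MulAction G (G → A) where
  smul g x := fun h => x (g⁻¹ * h)
  one_smul x := by funext h; show x (1⁻¹ * h) = x h; simp
  mul_smul g₁ g₂ x := by
    funext h
    show x ((g₁ * g₂)⁻¹ * h) = x (g₂⁻¹ * (g₁⁻¹ * h))
    simp [mul_assoc]

namespace ShiftSpace

variable {G A : Type*} [Group G]

theorem shift_apply (g : G) (x : G → A) (h : G) : (g • x) h = x (g⁻¹ * h) := rfl

open Classical in
noncomputable def rightCosetPattern (H : Subgroup G) (a b : A) (t : G) : G → A :=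
  fun h => if h * t ∈ H then a else b

variable {H : Subgroup G} {a b : A}

theorem rightCosetPattern_apply_eq_iff (hab : a ≠ b) (t h : G) :
    rightCosetPattern H a b t h = a ↔ h * t ∈ H := by
  unfold rightCosetPattern
  split_ifs with hmem <;> simp [hmem, hab.symm]

theorem stabilizer_rightCosetPattern (hab : a ≠ b) (t : G) :
    MulAction.stabilizer G (rightCosetPattern H a b t) = H := by
  ext g
  rw [MulAction.mem_stabilizer_iff]
  constructor
  · intro hg
    have hat : rightCosetPattern H a b t (g * t⁻¹) = a := by
      rw [← hg, shift_apply, inv_mul_cancel_left, rightCosetPattern_apply_eq_iff hab,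
        inv_mul_cancel]
      exact H.one_mem
    simpa using (rightCosetPattern_apply_eq_iff hab t _).mp hat
  · intro hg
    funext h
    rw [shift_apply]
    unfold rightCosetPattern
    rw [mul_assoc, mul_mem_cancel_left (H.inv_mem hg)]

theorem mem_of_rightCosetPattern_eq (hab : a ≠ b) {t t' : G}
    (heq : rightCosetPattern H a b t = rightCosetPattern H a b t') : t⁻¹ * t' ∈ H := by
  rw [← rightCosetPattern_apply_eq_iff hab, ← heq, rightCosetPattern_apply_eq_iff hab,
    inv_mul_cancel]
  exact H.one_mem

theorem injective_rightCosetPattern_out (hab : a ≠ b) :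
    Function.Injective fun q : G ⧸ H => rightCosetPattern H a b q.out := by
  intro q q' heq
  rw [← QuotientGroup.out_eq' q, ← QuotientGroup.out_eq' q']
  exact QuotientGroup.eq.mpr (mem_of_rightCosetPattern_eq hab heq)

end ShiftSpace

theorem stmt2 (G A : Type*) [Group G] [Nontrivial A] (H : Subgroup G)
    (hinf : ¬ H.FiniteIndex) :
    {x : G → A | MulAction.stabilizer G x = H}.Infinite := by
  obtain ⟨a, b, hab⟩ := exists_pair_ne A
  have : Infinite (G ⧸ H) :=
    Subgroup.index_eq_zero_iff_infinite.mp (Subgroup.not_finiteIndex_iff.mp hinf)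
  exact Set.infinite_of_injective_forall_mem (ShiftSpace.injective_rightCosetPattern_out hab)
    fun q => ShiftSpace.stabilizer_rightCosetPattern hab q.out
end

section
/- Let G be a finitely generated group, A a finite set of size q, and H a finite-index subgroup of G such that the interval [H, G] in the subgroup lattice is a chain H = H_0 < H_1 < … < H_k = G with k ≥ 1. Then the number of configurations in A^G with least period H equals q^{[G:H]} − q^{[G:H_1]}. -/
/-!
A configuration is fixed by a subgroup `K` exactly when it is constant on the right cosets `K g`,
so `q ^ [G : K]` configurations are fixed by `K` when `K` has finite index. A configuration fixed
by `H` has a stabilizer in the interval `[H, G]`; as this interval is a chain, either the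
stabilizer is exactly `H` or it contains `H₁`, and these two cases are disjoint. Hence
`q ^ [G : H] = N + q ^ [G : H₁]`, where `N` counts the configurations with least period `H`.
-/

open MulAction

section Configurations

variable {G : Type*} [Group G]

theorem shift_apply {A : Type*} (g : G) (x : G → A) (h : G) : (g • x) h = x (g⁻¹ * h) := rfl

theorem le_stabilizer_iff_rightRel_le_ker {A : Type*} (K : Subgroup G) (x : G → A) :
    K ≤ stabilizer G x ↔ QuotientGroup.rightRel K ≤ Setoid.ker x := by
  constructor
  · intro hK a b hab
    have hba : b * a⁻¹ ∈ K := QuotientGroup.rightRel_apply.mp hab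
    calc x a = ((b * a⁻¹) • x) b := by simp [shift_apply, mul_assoc]
      _ = x b := by rw [show (b * a⁻¹) • x = x from hK hba]
  · intro hK k hk
    funext h
    refine (hK (QuotientGroup.rightRel_apply.mpr ?_)).symm
    simpa [mul_assoc] using hk

variable (A : Type*)

def fixedConfigurationsEquiv (K : Subgroup G) :
    {x : G → A // K ≤ stabilizer G x} ≃ (G ⧸ K → A) :=
  ((Equiv.subtypeEquivRight fun x => le_stabilizer_iff_rightRel_le_ker K x).trans
    (Setoid.liftEquiv _)).trans
    ((QuotientGroup.quotientRightRelEquivQuotientLeftRel K).arrowCongr (.refl A))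

theorem card_fixedConfigurations (K : Subgroup G) [K.FiniteIndex] :
    Nat.card {x : G → A // K ≤ stabilizer G x} = Nat.card A ^ K.index := by
  rw [Nat.card_congr (fixedConfigurationsEquiv A K), Nat.card_fun, K.index_eq_card]

instance finite_fixedConfigurations [Finite A] (K : Subgroup G) [K.FiniteIndex] :
    Finite {x : G → A // K ≤ stabilizer G x} :=
  (fixedConfigurationsEquiv A K).finite_iff.mpr inferInstance

theorem card_stabilizer_eq_add_pow_index [Finite A] {H M : Subgroup G} [H.FiniteIndex]
    (hHM : H < M) (hcover : ∀ K, H < K → M ≤ K) :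
    Nat.card {x : G → A // stabilizer G x = H} + Nat.card A ^ M.index =
      Nat.card A ^ H.index := by
  have : M.FiniteIndex := Subgroup.finiteIndex_of_le hHM.le
  have hdisj : Disjoint (fun x : G → A => stabilizer G x = H) (fun x => M ≤ stabilizer G x) :=
    Pi.disjoint_iff.mpr fun x => Prop.disjoint_iff.mpr fun ⟨hx, hMx⟩ => (hx ▸ hHM).not_ge hMx
  have hsplit (x : G → A) : H ≤ stabilizer G x ↔ stabilizer G x = H ∨ M ≤ stabilizer G x := by
    refine ⟨fun hx => ?_, ?_⟩
    · exact hx.eq_or_lt.imp Eq.symm (hcover _)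
    · rintro (hx | hx)
      exacts [hx.ge, hHM.le.trans hx]
  have : Finite {x : G → A // stabilizer G x = H} :=
    Finite.of_injective _ (Subtype.impEmbedding _ (fun x => H ≤ stabilizer G x)
      fun _ hx => hx.ge).injective
  classical
  rw [← card_fixedConfigurations, ← card_fixedConfigurations, ← Nat.card_sum,
    Nat.card_congr ((subtypeOrEquiv _ _ hdisj).symm.trans
      (Equiv.subtypeEquivRight fun x => (hsplit x).symm))]

end Configurations

theorem StrictMono.apply_one_le_of_apply_zero_lt {α : Type*} [Preorder α] {k : ℕ}
    {c : Fin (k + 1) → α} (hc : StrictMono c) (hrange : ∀ a, c 0 ≤ a → ∃ i, a = c i)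
    {a : α} (ha : c 0 < a) : c 1 ≤ a := by
  obtain ⟨i, rfl⟩ := hrange a ha.le
  have hi : i ≠ 0 := by rintro rfl; exact ha.false
  exact hc.monotone (Fin.one_le_of_ne_zero hi)

theorem stmt13_general (G A : Type*) [Group G] [Finite A]
    (H : Subgroup G) (hH : H.FiniteIndex) (q : ℕ) (hq : Nat.card A = q)
    (k : ℕ) (hk : 1 ≤ k) (c : Fin (k + 1) → Subgroup G)
    (hmono : ∀ i j : Fin (k + 1), i < j → c i < c j)
    (h0 : c 0 = H)
    (hint : ∀ K : Subgroup G, H ≤ K → ∃ i, K = c i) :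
    (Nat.card {x : G → A // MulAction.stabilizer G x = H} : ℤ) =
      (q : ℤ) ^ H.index - (q : ℤ) ^ (c 1).index := by
  have hc : StrictMono c := fun i j => hmono i j
  subst h0 hq
  have : NeZero k := ⟨by omega⟩
  have hcard := card_stabilizer_eq_add_pow_index A (hc Fin.one_pos')
    fun K => hc.apply_one_le_of_apply_zero_lt hint
  exact eq_sub_of_add_eq (by exact_mod_cast hcard)

theorem stmt13 (G A : Type*) [Group G] [Group.FG G] [Finite A]
    (H : Subgroup G) (hH : H.FiniteIndex) (q : ℕ) (hq : Nat.card A = q)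
    (k : ℕ) (hk : 1 ≤ k) (c : Fin (k + 1) → Subgroup G)
    (hmono : ∀ i j : Fin (k + 1), i < j → c i < c j)
    (h0 : c 0 = H) (hlast : c (Fin.last k) = ⊤)
    (hint : ∀ K : Subgroup G, H ≤ K → ∃ i, K = c i) :
    (Nat.card {x : G → A // MulAction.stabilizer G x = H} : ℤ) =
      (q : ℤ) ^ H.index - (q : ℤ) ^ (c 1).index :=
  stmt13_general G A H hH q hq k hk c hmono h0 hint
end
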